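/- arXiv:2106.11612 — 2 statements merged into one kernel-verified Lean document; each statement's English description precedes it below -/
import Mathlib

section
/- Let d, l, m be positive integers, let λ ≥ 1 be a real number, and let x₁, …, x_m ∈ ℝ^d satisfy ‖x_i‖₂ ≤ 1 for all i. Suppose that for every index i with 2 ≤ i ≤ m, one has x_iᵀ (λ·I_d + Σ_{j=1}^{i−1} x_j x_jᵀ)^{−1} x_i ≥ 4^{−l}. Then m ≤ 17 · d · l · 4^l. -/
open Matrix Finset

/-!
Write `V i = λ I + ∑_{j ≤ i} x_j x_jᵀ`. By the matrix determinant lemma,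
`det V i = det V (i-1) * (1 + x_iᵀ V (i-1)⁻¹ x_i)`, so the width hypothesis gives
`det V m ≥ λ^d (1 + 4^{-l})^(m-1)`. On the other hand AM-GM on the eigenvalues gives
`det V m ≤ (tr V m / d)^d ≤ λ^d (1 + m/d)^d`, since every `‖x_j‖ ≤ 1` and `λ ≥ 1`.
Comparing logarithms, `s = m/d` satisfies `s - 1 ≤ (1 + 4^l) log (1 + s)`, and bounding `log` by
its tangent line at `16^l` turns this into `s ≤ 17 l 4^l`.
-/

theorem Real.prod_le_sum_div_card_pow {ι : Type*} [Fintype ι] {z : ι → ℝ} (hz : ∀ i, 0 ≤ z i) :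
    ∏ i, z i ≤ ((∑ i, z i) / Fintype.card ι) ^ Fintype.card ι := by
  rcases isEmpty_or_nonempty ι with _ | _
  · simp
  have hcard : Fintype.card ι ≠ 0 := Fintype.card_ne_zero
  have hprod : 0 ≤ ∏ i, z i := prod_nonneg fun i _ ↦ hz i
  have amgm := Real.geom_mean_le_arith_mean univ (fun _ ↦ 1) z (fun _ _ ↦ zero_le_one)
    (by simpa using Fintype.card_pos) (fun i _ ↦ hz i)
  simp only [Real.rpow_one, sum_const, card_univ, nsmul_eq_mul, mul_one, one_mul] at amgm
  calc ∏ i, z i = ((∏ i, z i) ^ ((Fintype.card ι : ℝ)⁻¹)) ^ Fintype.card ι :=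
        (Real.rpow_inv_natCast_pow hprod hcard).symm
    _ ≤ _ := pow_le_pow_left₀ (by positivity) amgm _

namespace Matrix

variable {n : Type*} [Fintype n] [DecidableEq n]

theorem PosSemidef.det_le_trace_div_card_pow {A : Matrix n n ℝ} (hA : A.PosSemidef) :
    A.det ≤ (A.trace / Fintype.card n) ^ Fintype.card n := by
  rw [hA.isHermitian.det_eq_prod_eigenvalues, hA.isHermitian.trace_eq_sum_eigenvalues]
  simpa using Real.prod_le_sum_div_card_pow hA.eigenvalues_nonneg

theorem det_add_vecMulVec {R : Type*} [CommRing R] {A : Matrix n n R} (hA : IsUnit A.det)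
    (u v : n → R) : (A + vecMulVec u v).det = A.det * (1 + v ⬝ᵥ A⁻¹ *ᵥ u) := by
  have hfactor : A + vecMulVec u v = A * (1 + vecMulVec (A⁻¹ *ᵥ u) v) := by
    rw [Matrix.mul_add, Matrix.mul_one, mul_vecMulVec, mulVec_mulVec, mul_nonsing_inv _ hA,
      one_mulVec]
  rw [hfactor, det_mul, vecMulVec_eq Unit, det_one_add_replicateCol_mul_replicateRow]

end Matrix

section regularizedGram

variable {n : Type*} [DecidableEq n]

noncomputable def regularizedGram (lam : ℝ) (x : ℕ → n → ℝ) (i : ℕ) : Matrix n n ℝ :=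
  lam • 1 + ∑ j ∈ Icc 1 i, vecMulVec (x j) (x j)

variable {lam : ℝ} {x : ℕ → n → ℝ}

theorem regularizedGram_succ (i : ℕ) :
    regularizedGram lam x (i + 1) =
      regularizedGram lam x i + vecMulVec (x (i + 1)) (x (i + 1)) := by
  rw [regularizedGram, regularizedGram, sum_Icc_succ_top (Nat.le_add_left 1 i), add_assoc]

variable [Fintype n]

theorem posDef_regularizedGram (hlam : 0 < lam) (i : ℕ) : (regularizedGram lam x i).PosDef :=
  (PosDef.one.smul hlam).add_posSemidef
    (posSemidef_sum _ fun j _ ↦ by simpa using posSemidef_vecMulVec_self_star (x j))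

theorem det_regularizedGram_zero : (regularizedGram lam x 0).det = lam ^ Fintype.card n := by
  simp [regularizedGram]

theorem det_regularizedGram_succ (hlam : 0 < lam) (i : ℕ) :
    (regularizedGram lam x (i + 1)).det = (regularizedGram lam x i).det *
      (1 + x (i + 1) ⬝ᵥ (regularizedGram lam x i)⁻¹ *ᵥ x (i + 1)) := by
  rw [regularizedGram_succ, det_add_vecMulVec (posDef_regularizedGram hlam i).det_pos.ne'.isUnit]

theorem trace_regularizedGram (i : ℕ) :
    (regularizedGram lam x i).trace = Fintype.card n * lam + ∑ j ∈ Icc 1 i, x j ⬝ᵥ x j := by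
  simp [regularizedGram, trace_sum, mul_comm]

theorem pow_mul_pow_le_det_regularizedGram (hlam : 0 < lam) {ε : ℝ} (hε : 0 ≤ ε) {m : ℕ}
    (hwidth : ∀ i, 2 ≤ i → i ≤ m → ε ≤ x i ⬝ᵥ (regularizedGram lam x (i - 1))⁻¹ *ᵥ x i) :
    lam ^ Fintype.card n * (1 + ε) ^ (m - 1) ≤ (regularizedGram lam x m).det := by
  induction m with
  | zero => simp [det_regularizedGram_zero]
  | succ m ih =>
    have ih := ih fun i hi him ↦ hwidth i hi (by omega)
    have hG := posDef_regularizedGram (x := x) hlam m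
    have hwidth_nonneg : 0 ≤ x (m + 1) ⬝ᵥ (regularizedGram lam x m)⁻¹ *ᵥ x (m + 1) :=
      hG.inv.posSemidef.dotProduct_mulVec_nonneg _
    rw [det_regularizedGram_succ hlam]
    rcases Nat.eq_zero_or_pos m with rfl | hm
    · simp only [zero_tsub, pow_zero, mul_one] at ih ⊢
      nlinarith [hG.det_pos]
    · have hwidth_m := hwidth (m + 1) (by omega) le_rfl
      rw [Nat.add_sub_cancel] at hwidth_m
      calc lam ^ Fintype.card n * (1 + ε) ^ (m + 1 - 1)
          = lam ^ Fintype.card n * (1 + ε) ^ (m - 1) * (1 + ε) := by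
            rw [mul_assoc, ← pow_succ, Nat.sub_add_cancel hm, Nat.add_sub_cancel]
        _ ≤ _ := mul_le_mul ih (by linarith) (by linarith) hG.det_pos.le

theorem det_regularizedGram_le [Nonempty n] (hlam : 0 < lam) {m : ℕ}
    (hx : ∀ j ∈ Icc 1 m, x j ⬝ᵥ x j ≤ 1) :
    (regularizedGram lam x m).det ≤ (lam + m / Fintype.card n) ^ Fintype.card n := by
  have hcard : (0 : ℝ) < Fintype.card n := by exact_mod_cast Fintype.card_pos
  have hG := (posDef_regularizedGram (x := x) hlam m).posSemidef
  have hsum : ∑ j ∈ Icc 1 m, x j ⬝ᵥ x j ≤ m := by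
    simpa using sum_le_card_nsmul _ _ _ hx
  refine hG.det_le_trace_div_card_pow.trans
    (pow_le_pow_left₀ (by positivity [hG.trace_nonneg]) ?_ _)
  rw [trace_regularizedGram, add_div, mul_div_cancel_left₀ _ hcard.ne']
  gcongr

theorem one_add_pow_pred_le_one_add_div_card_pow [Nonempty n] {lam ε : ℝ} {x : ℕ → n → ℝ}
    (hlam : 1 ≤ lam) (hε : 0 ≤ ε) {m : ℕ} (hx : ∀ j ∈ Icc 1 m, x j ⬝ᵥ x j ≤ 1)
    (hwidth : ∀ i, 2 ≤ i → i ≤ m → ε ≤ x i ⬝ᵥ (regularizedGram lam x (i - 1))⁻¹ *ᵥ x i) :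
    (1 + ε) ^ (m - 1) ≤ (1 + m / Fintype.card n) ^ Fintype.card n := by
  have hlam0 : 0 < lam := one_pos.trans_le hlam
  have hdet := (pow_mul_pow_le_det_regularizedGram hlam0 hε hwidth).trans
    (det_regularizedGram_le hlam0 hx)
  have hscale : lam + m / Fintype.card n ≤ lam * (1 + m / Fintype.card n) := by
    nlinarith [div_nonneg (m.cast_nonneg (α := ℝ)) (Fintype.card n).cast_nonneg]
  refine le_of_mul_le_mul_left (hdet.trans ?_) (pow_pos hlam0 _)
  rw [← mul_pow]
  exact pow_le_pow_left₀ (by positivity) hscale _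

end regularizedGram

theorem div_sub_one_le_mul_log_of_pow_le {ε : ℝ} (hε : 0 < ε) {m d : ℕ} (hd : 0 < d)
    (h : (1 + ε) ^ (m - 1) ≤ (1 + m / d) ^ d) :
    (m / d : ℝ) - 1 ≤ (1 + ε⁻¹) * Real.log (1 + m / d) := by
  have hd' : (0 : ℝ) < d := by exact_mod_cast hd
  have hlog : ((m - 1 : ℕ) : ℝ) * Real.log (1 + ε) ≤ d * Real.log (1 + m / d) := by
    simpa only [Real.log_pow] using Real.log_le_log (by positivity) h
  have hlog_ε : (1 + ε⁻¹)⁻¹ ≤ Real.log (1 + ε) := by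
    convert Real.one_sub_inv_le_log_of_pos (by positivity : 0 < 1 + ε) using 1
    field_simp
    ring
  have hpred : (m : ℝ) - d ≤ ((m - 1 : ℕ) : ℝ) := by
    have : (1 : ℝ) ≤ d := by exact_mod_cast hd
    rcases m with _ | m <;> simp; linarith
  have hk : ((m - 1 : ℕ) : ℝ) ≤ (1 + ε⁻¹) * (d * Real.log (1 + m / d)) := by
    calc ((m - 1 : ℕ) : ℝ) = (1 + ε⁻¹) * (((m - 1 : ℕ) : ℝ) * (1 + ε⁻¹)⁻¹) := by
          field_simp
      _ ≤ (1 + ε⁻¹) * (((m - 1 : ℕ) : ℝ) * Real.log (1 + ε)) := by gcongr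
      _ ≤ _ := by gcongr
  rw [div_sub_one hd'.ne', div_le_iff₀ hd']
  linarith

theorem le_mul_four_pow_of_sub_one_le_mul_log {l : ℕ} (hl : 0 < l) {s : ℝ} (hs : 0 ≤ s)
    (h : s - 1 ≤ (1 + 4 ^ l) * Real.log (1 + s)) : s ≤ 17 * l * 4 ^ l := by
  set a : ℝ := 4 ^ l with ha_def
  have ha : 4 ≤ a := le_self_pow₀ (by norm_num) hl.ne'
  have hlog_a : Real.log a ≤ 1.3863 * l := by
    rw [ha_def, Real.log_pow, show (4 : ℝ) = 2 ^ 2 by norm_num, Real.log_pow]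
    have := Real.log_two_lt_d9
    push_cast
    nlinarith [(l.cast_nonneg : (0 : ℝ) ≤ l)]
  -- the tangent line of `log` at `a ^ 2`
  have hlog : Real.log (1 + s) ≤ (1 + s) / a ^ 2 + 2 * Real.log a - 1 := by
    have := Real.log_le_sub_one_of_pos (show 0 < (1 + s) / a ^ 2 by positivity)
    rw [Real.log_div (by positivity) (by positivity), Real.log_pow] at this
    push_cast at this
    linarith
  have hquot : (1 + a) * ((1 + s) / a ^ 2) ≤ 5 / 16 * (1 + s) := by
    have : 1 + a ≤ 5 / 16 * a ^ 2 := by nlinarith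
    rw [← mul_div_assoc, div_le_iff₀ (by positivity)]
    nlinarith
  have hl1 : (1 : ℝ) ≤ l := by exact_mod_cast hl
  nlinarith

theorem level_set_size_bound_general
    (d l m : ℕ) (hd : 0 < d) (hl : 0 < l)
    (lam : ℝ) (hlam : 1 ≤ lam)
    (x : ℕ → Fin d → ℝ)
    (hx : ∀ i ∈ Finset.Icc 1 m, Real.sqrt (x i ⬝ᵥ x i) ≤ 1)
    (hlow : ∀ i : ℕ, 2 ≤ i → i ≤ m →
      ((4 : ℝ) ^ l)⁻¹ ≤
        x i ⬝ᵥ ((lam • (1 : Matrix (Fin d) (Fin d) ℝ)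
          + ∑ j ∈ Finset.Icc 1 (i - 1), Matrix.vecMulVec (x j) (x j))⁻¹).mulVec (x i)) :
    (m : ℝ) ≤ 17 * d * l * 4 ^ l := by
  have : Nonempty (Fin d) := Fin.pos_iff_nonempty.mp hd
  have hcount := one_add_pow_pred_le_one_add_div_card_pow (n := Fin d) hlam (by positivity)
    (fun j hj ↦ Real.sqrt_le_one.mp (hx j hj)) hlow
  rw [Fintype.card_fin] at hcount
  have hlog := div_sub_one_le_mul_log_of_pow_le (by positivity) hd hcount
  rw [inv_inv] at hlog
  have hratio := le_mul_four_pow_of_sub_one_le_mul_log hl (by positivity) hlog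
  rw [div_le_iff₀ (by positivity)] at hratio
  linarith

/-- If every `x_i` (for `2 ≤ i ≤ m`) has squared confidence width at least `4^{-l}`
against the regularized covariance matrix of the previous elements, then
`m ≤ 17 d l 4^l`. -/
theorem level_set_size_bound
    (d l m : ℕ) (hd : 0 < d) (hl : 0 < l) (hm : 0 < m)
    (lam : ℝ) (hlam : 1 ≤ lam)
    (x : ℕ → Fin d → ℝ)
    (hx : ∀ i ∈ Finset.Icc 1 m, Real.sqrt (x i ⬝ᵥ x i) ≤ 1)
    (hlow : ∀ i : ℕ, 2 ≤ i → i ≤ m →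
      ((4 : ℝ) ^ l)⁻¹ ≤
        x i ⬝ᵥ ((lam • (1 : Matrix (Fin d) (Fin d) ℝ)
          + ∑ j ∈ Finset.Icc 1 (i - 1), Matrix.vecMulVec (x j) (x j))⁻¹).mulVec (x i)) :
    (m : ℝ) ≤ 17 * d * l * 4 ^ l :=
  level_set_size_bound_general d l m hd hl lam hlam x hx hlow
end

section
/- Let S be a nonempty set, A a nonempty finite set, d and l positive integers, and let φ : S × A → ℝ^d satisfy ‖φ(s,a)‖₂ ≤ 1 for all (s,a). Let H > 0 and β ≥ 0. For j ∈ {1,2}, let w_{j,1}, …, w_{j,l} ∈ ℝ^d and let Γ_{j,1}, …, Γ_{j,l} be symmetric positive semidefinite d×d matrices, and define V_j(s) = max_{a ∈ A} min_{1 ≤ i ≤ l} min{ H, ⟨w_{j,i}, φ(s,a)⟩ + β·√(φ(s,a)ᵀ Γ_{j,i} φ(s,a)) }. Then sup_{s ∈ S} |V₁(s) − V₂(s)| ≤ max_{1 ≤ i ≤ l} ‖w_{1,i} − w_{2,i}‖₂ + β · max_{1 ≤ i ≤ l} √(‖Γ_{1,i} − Γ_{2,i}‖_F), where ‖·‖_F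 denotes the Frobenius norm of a matrix. -/
/-!
Every map in the definition of `V_j` is 1-Lipschitz in the sup-distance: `max` over `a`,
`min` over `i` and the truncation `min H`. So it suffices to compare the optimistic values
`⟨w, φ⟩ + β √(φᵀ Γ φ)` index by index. For `‖φ‖ ≤ 1`, the linear parts differ by at most
`‖w₁ - w₂‖` (Cauchy–Schwarz), and `|√a - √b| ≤ √|a - b|` together with
`|φᵀ (Γ₁ - Γ₂) φ| ≤ ‖Γ₁ - Γ₂‖_F ‖φ‖²` bounds the bonus terms.
-/

open Matrix Finset

namespace Real

theorem abs_sqrt_sub_sqrt_le_sqrt_abs_sub (x y : ℝ) : |√x - √y| ≤ √|x - y| := by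
  wlog hyx : y ≤ x generalizing x y
  · rw [abs_sub_comm, abs_sub_comm x]
    exact this y x (le_of_not_ge hyx)
  rw [abs_of_nonneg (sub_nonneg.2 (sqrt_le_sqrt hyx)), abs_of_nonneg (sub_nonneg.2 hyx),
    sub_le_iff_le_add]
  rcases le_total y 0 with hy | hy
  · rw [sqrt_eq_zero_of_nonpos hy, add_zero]
    exact sqrt_le_sqrt (by linarith)
  · rw [sqrt_le_left (by positivity)]
    nlinarith [sq_sqrt (sub_nonneg.2 hyx), sq_sqrt hy,
      mul_nonneg (sqrt_nonneg (x - y)) (sqrt_nonneg y)]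

end Real

namespace Matrix

variable {n : Type*} [Fintype n]

theorem dotProduct_self_eq_sum_sq (v : n → ℝ) : v ⬝ᵥ v = ∑ i, v i ^ 2 := by
  simp only [dotProduct, sq]

theorem dotProduct_self_nonneg (v : n → ℝ) : 0 ≤ v ⬝ᵥ v := by
  rw [dotProduct_self_eq_sum_sq]; positivity

theorem abs_dotProduct_le_sqrt_mul_sqrt (v w : n → ℝ) :
    |v ⬝ᵥ w| ≤ √(v ⬝ᵥ v) * √(w ⬝ᵥ w) := by
  rw [← Real.sqrt_sq_eq_abs, ← Real.sqrt_mul (dotProduct_self_nonneg v)]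
  refine Real.sqrt_le_sqrt ?_
  rw [dotProduct_self_eq_sum_sq, dotProduct_self_eq_sum_sq]
  exact sum_mul_sq_le_sq_mul_sq univ v w

theorem mulVec_dotProduct_mulVec_self_le (M : Matrix n n ℝ) (v : n → ℝ) :
    M *ᵥ v ⬝ᵥ M *ᵥ v ≤ (∑ p, ∑ q, M p q ^ 2) * (v ⬝ᵥ v) := by
  rw [dotProduct_self_eq_sum_sq, dotProduct_self_eq_sum_sq, sum_mul]
  exact sum_le_sum fun p _ => sum_mul_sq_le_sq_mul_sq univ (M p) v

theorem abs_dotProduct_mulVec_self_le (M : Matrix n n ℝ) (v : n → ℝ) :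
    |v ⬝ᵥ M *ᵥ v| ≤ √(∑ p, ∑ q, M p q ^ 2) * (v ⬝ᵥ v) := by
  have hv : 0 ≤ v ⬝ᵥ v := dotProduct_self_nonneg v
  calc |v ⬝ᵥ M *ᵥ v|
      ≤ √(v ⬝ᵥ v) * √(M *ᵥ v ⬝ᵥ M *ᵥ v) := abs_dotProduct_le_sqrt_mul_sqrt _ _
    _ ≤ √(v ⬝ᵥ v) * √((∑ p, ∑ q, M p q ^ 2) * (v ⬝ᵥ v)) := by
        gcongr; exact mulVec_dotProduct_mulVec_self_le M v
    _ = √(∑ p, ∑ q, M p q ^ 2) * (v ⬝ᵥ v) := by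
        rw [Real.sqrt_mul' _ hv, mul_left_comm, Real.mul_self_sqrt hv]

end Matrix

section SupInf

variable {ι : Type*} [Nonempty ι] [Finite ι] {f g : ι → ℝ} {C : ℝ}

theorem ciSup_sub_ciSup_le (h : ∀ i, f i - g i ≤ C) : (⨆ i, f i) - ⨆ i, g i ≤ C :=
  sub_le_iff_le_add.2 <| ciSup_le fun i =>
    (sub_le_iff_le_add.1 (h i)).trans (add_le_add_right (le_ciSup (Finite.bddAbove_range g) i) C)

theorem ciInf_sub_ciInf_le (h : ∀ i, f i - g i ≤ C) : (⨅ i, f i) - ⨅ i, g i ≤ C :=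
  sub_le_comm.1 <| le_ciInf fun i =>
    sub_le_comm.1 ((sub_le_sub_right (ciInf_le (Finite.bddBelow_range f) i) _).trans (h i))

theorem abs_ciSup_sub_ciSup_le (h : ∀ i, |f i - g i| ≤ C) : |(⨆ i, f i) - ⨆ i, g i| ≤ C :=
  abs_sub_le_iff.2
    ⟨ciSup_sub_ciSup_le fun i => (abs_sub_le_iff.1 (h i)).1,
     ciSup_sub_ciSup_le fun i => (abs_sub_le_iff.1 (h i)).2⟩

theorem abs_ciInf_sub_ciInf_le (h : ∀ i, |f i - g i| ≤ C) : |(⨅ i, f i) - ⨅ i, g i| ≤ C :=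
  abs_sub_le_iff.2
    ⟨ciInf_sub_ciInf_le fun i => (abs_sub_le_iff.1 (h i)).1,
     ciInf_sub_ciInf_le fun i => (abs_sub_le_iff.1 (h i)).2⟩

end SupInf

section OptimisticValue

variable {d : Type*} [Fintype d] {x : d → ℝ}

theorem abs_dotProduct_sub_dotProduct_le (hx : √(x ⬝ᵥ x) ≤ 1) (w₁ w₂ : d → ℝ) :
    |w₁ ⬝ᵥ x - w₂ ⬝ᵥ x| ≤ √((w₁ - w₂) ⬝ᵥ (w₁ - w₂)) := by
  rw [← sub_dotProduct]
  exact (abs_dotProduct_le_sqrt_mul_sqrt _ _).trans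
    (mul_le_of_le_one_right (Real.sqrt_nonneg _) hx)

theorem abs_sqrt_quadForm_sub_le (hx : √(x ⬝ᵥ x) ≤ 1) (Γ₁ Γ₂ : Matrix d d ℝ) :
    |√(x ⬝ᵥ Γ₁ *ᵥ x) - √(x ⬝ᵥ Γ₂ *ᵥ x)| ≤ √√(∑ p, ∑ q, (Γ₁ p q - Γ₂ p q) ^ 2) := by
  refine (Real.abs_sqrt_sub_sqrt_le_sqrt_abs_sub _ _).trans (Real.sqrt_le_sqrt ?_)
  rw [← dotProduct_sub, ← sub_mulVec]
  exact (abs_dotProduct_mulVec_self_le _ x).trans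
    (mul_le_of_le_one_right (Real.sqrt_nonneg _) (Real.sqrt_le_one.1 hx))

theorem abs_min_optimistic_sub_le (hx : √(x ⬝ᵥ x) ≤ 1) (H : ℝ) {β : ℝ} (hβ : 0 ≤ β)
    (w₁ w₂ : d → ℝ) (Γ₁ Γ₂ : Matrix d d ℝ) :
    |min H (w₁ ⬝ᵥ x + β * √(x ⬝ᵥ Γ₁ *ᵥ x)) - min H (w₂ ⬝ᵥ x + β * √(x ⬝ᵥ Γ₂ *ᵥ x))| ≤
      √((w₁ - w₂) ⬝ᵥ (w₁ - w₂)) + β * √√(∑ p, ∑ q, (Γ₁ p q - Γ₂ p q) ^ 2) := by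
  calc _ ≤ |(w₁ ⬝ᵥ x + β * √(x ⬝ᵥ Γ₁ *ᵥ x)) - (w₂ ⬝ᵥ x + β * √(x ⬝ᵥ Γ₂ *ᵥ x))| := by
        simpa only [sub_self, abs_zero, abs_nonneg, max_eq_right]
          using abs_min_sub_min_le_max H _ H _
    _ = |(w₁ ⬝ᵥ x - w₂ ⬝ᵥ x) + β * (√(x ⬝ᵥ Γ₁ *ᵥ x) - √(x ⬝ᵥ Γ₂ *ᵥ x))| := by
        congr 1; ring
    _ ≤ |w₁ ⬝ᵥ x - w₂ ⬝ᵥ x| + β * |√(x ⬝ᵥ Γ₁ *ᵥ x) - √(x ⬝ᵥ Γ₂ *ᵥ x)| :=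
        (abs_add_le _ _).trans_eq (by rw [abs_mul, abs_of_nonneg hβ])
    _ ≤ _ := by
        gcongr
        exacts [abs_dotProduct_sub_dotProduct_le hx w₁ w₂, abs_sqrt_quadForm_sub_le hx Γ₁ Γ₂]

end OptimisticValue

theorem value_function_contraction_general
    {S : Type*} {A : Type*} [Fintype A] [Nonempty A]
    (d l : ℕ) (hl : 0 < l)
    (φ : S → A → Fin d → ℝ) (hφ : ∀ s a, Real.sqrt (φ s a ⬝ᵥ φ s a) ≤ 1)
    (H β : ℝ) (hβ : 0 ≤ β)
    (w₁ w₂ : Fin l → Fin d → ℝ)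
    (Γ₁ Γ₂ : Fin l → Matrix (Fin d) (Fin d) ℝ)
    (V₁ V₂ : S → ℝ)
    (hV₁ : ∀ s, V₁ s = ⨆ a : A, ⨅ i : Fin l,
      min H (w₁ i ⬝ᵥ φ s a + β * Real.sqrt (φ s a ⬝ᵥ (Γ₁ i).mulVec (φ s a))))
    (hV₂ : ∀ s, V₂ s = ⨆ a : A, ⨅ i : Fin l,
      min H (w₂ i ⬝ᵥ φ s a + β * Real.sqrt (φ s a ⬝ᵥ (Γ₂ i).mulVec (φ s a)))) :
    ∀ s, |V₁ s - V₂ s| ≤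
      (⨆ i : Fin l, Real.sqrt ((w₁ i - w₂ i) ⬝ᵥ (w₁ i - w₂ i)))
      + β * ⨆ i : Fin l,
          Real.sqrt (Real.sqrt (∑ p : Fin d, ∑ q : Fin d, (Γ₁ i p q - Γ₂ i p q) ^ 2)) := by
  intro s
  have : Nonempty (Fin l) := ⟨⟨0, hl⟩⟩
  rw [hV₁, hV₂]
  refine abs_ciSup_sub_ciSup_le fun a => abs_ciInf_sub_ciInf_le fun i => ?_
  refine (abs_min_optimistic_sub_le (hφ s a) H hβ _ _ _ _).trans ?_
  gcongr
  exacts [le_ciSup (f := fun i => √((w₁ i - w₂ i) ⬝ᵥ (w₁ i - w₂ i))) (Finite.bddAbove_range _) i,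
    le_ciSup (f := fun i => √√(∑ p, ∑ q, (Γ₁ i p q - Γ₂ i p q) ^ 2)) (Finite.bddAbove_range _) i]

/-- Contraction estimate: the sup-distance between two max-min truncated optimistic
value functions is bounded by the max distance between the weight vectors plus
`β` times the max square root of the Frobenius distance between the matrices. -/
theorem value_function_contraction
    {S : Type*} [Nonempty S] {A : Type*} [Fintype A] [Nonempty A]
    (d l : ℕ) (hd : 0 < d) (hl : 0 < l)
    (φ : S → A → Fin d → ℝ) (hφ : ∀ s a, Real.sqrt (φ s a ⬝ᵥ φ s a) ≤ 1)
    (H β : ℝ) (hH : 0 < H) (hβ : 0 ≤ β)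
    (w₁ w₂ : Fin l → Fin d → ℝ)
    (Γ₁ Γ₂ : Fin l → Matrix (Fin d) (Fin d) ℝ)
    (hΓ₁ : ∀ i, (Γ₁ i).PosSemidef) (hΓ₂ : ∀ i, (Γ₂ i).PosSemidef)
    (V₁ V₂ : S → ℝ)
    (hV₁ : ∀ s, V₁ s = ⨆ a : A, ⨅ i : Fin l,
      min H (w₁ i ⬝ᵥ φ s a + β * Real.sqrt (φ s a ⬝ᵥ (Γ₁ i).mulVec (φ s a))))
    (hV₂ : ∀ s, V₂ s = ⨆ a : A, ⨅ i : Fin l,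
      min H (w₂ i ⬝ᵥ φ s a + β * Real.sqrt (φ s a ⬝ᵥ (Γ₂ i).mulVec (φ s a)))) :
    ∀ s, |V₁ s - V₂ s| ≤
      (⨆ i : Fin l, Real.sqrt ((w₁ i - w₂ i) ⬝ᵥ (w₁ i - w₂ i)))
      + β * ⨆ i : Fin l,
          Real.sqrt (Real.sqrt (∑ p : Fin d, ∑ q : Fin d, (Γ₁ i p q - Γ₂ i p q) ^ 2)) :=
  value_function_contraction_general d l hl φ hφ H β hβ w₁ w₂ Γ₁ Γ₂ V₁ V₂ hV₁ hV₂
end
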